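/- arXiv:0812.1651 — 2 statements merged into one kernel-verified Lean document; each statement's English description precedes it below -/
import Mathlib

section
/- In the Clifford algebra Cl(R^7) acting on the real 8-dimensional spin representation Σ, the element ω = e₁₂₃ − e₁₄₅ − e₁₆₇ − e₂₄₆ + e₂₅₇ − e₃₄₇ − e₃₅₆ (Clifford products of orthonormal basis vectors) acts as a symmetric endomorphism with eigenvalue −7 of multiplicity one and eigenvalue +1 of multiplicity seven. -/
/-- The negative definite quadratic form on ℝ⁷ (convention eᵢ·eᵢ = −1). -/
noncomputable def Q : QuadraticForm ℝ (Fin 7 → ℝ) :=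
  QuadraticMap.weightedSumSquares ℝ (fun _ : Fin 7 => (-1 : ℝ))

/-- The Clifford generators e₁,…,e₇ (0-indexed: `e i` is e_{i+1}). -/
noncomputable def e (i : Fin 7) : CliffordAlgebra Q := CliffordAlgebra.ι Q (Pi.single i 1)

/-- ω = e₁₂₃ − e₁₄₅ − e₁₆₇ − e₂₄₆ + e₂₅₇ − e₃₄₇ − e₃₅₆ as a Clifford algebra element. -/
noncomputable def ω : CliffordAlgebra Q :=
  e 0 * e 1 * e 2 - e 0 * e 3 * e 4 - e 0 * e 5 * e 6 - e 1 * e 3 * e 5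
    + e 1 * e 4 * e 6 - e 2 * e 3 * e 6 - e 2 * e 4 * e 5

/-- The characteristic torsion element T = 2ω − 8e₁₂₃. -/
noncomputable def T : CliffordAlgebra Q := (2 : ℝ) • ω - (8 : ℝ) • (e 0 * e 1 * e 2)

/-!
Realise `Cl(ℝ⁷)` on `ℝ⁸` by the signed permutation matrices `Γᵢ` moving the basis vector `e_k`
to `±e_{k xor i}` (indices `i = 1,…,7`); with suitable signs they are skew, square to `-1` and
pairwise anticommute. Every triple `{a, b, c}` occurring in `ω` is a line of the Fano plane, i.e.
`a xor b xor c = 0`, so each `Γ_a Γ_b Γ_c` is a diagonal sign matrix, and the seven of them add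
up to `diag(1, 1, 1, -7, 1, 1, 1, 1)`.
-/

open Finset Module

namespace CliffordAlgebra

variable {ι R A : Type*} [Fintype ι] [CommRing R] [Ring A] [Algebra R A]

theorem sum_smul_mul_self_of_anticommute (w : ι → R) (γ : ι → A)
    (hsq : ∀ i, γ i * γ i = algebraMap R A (w i))
    (hanti : ∀ i j, i ≠ j → γ i * γ j + γ j * γ i = 0) (v : ι → R) :
    (∑ i, v i • γ i) * (∑ i, v i • γ i) =
      algebraMap R A (QuadraticMap.weightedSumSquares R w v) := by
  classical
  set F : ι × ι → A := fun p => (v p.1 * v p.2) • (γ p.1 * γ p.2)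
  have hoff : ∑ p ∈ univ.offDiag, F p = 0 :=
    sum_involution (fun p _ => p.swap)
      (fun p hp => by
        simp only [F, Prod.fst_swap, Prod.snd_swap, mul_comm (v p.2), ← smul_add]
        rw [hanti _ _ (mem_offDiag.1 hp).2.2, smul_zero])
      (fun p hp _ => by simpa [Prod.ext_iff, eq_comm] using (mem_offDiag.1 hp).2.2)
      (fun p hp => by simpa [and_comm, eq_comm] using hp)
      (fun p _ => p.swap_swap)
  calc (∑ i, v i • γ i) * (∑ i, v i • γ i)
      = ∑ p ∈ univ ×ˢ univ, F p := by
        simp only [sum_mul_sum, sum_product, F, smul_mul_smul_comm]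
    _ = ∑ p ∈ univ.diag, F p := by
        rw [← diag_union_offDiag, sum_union (disjoint_diag_offDiag _), hoff, add_zero]
    _ = algebraMap R A (QuadraticMap.weightedSumSquares R w v) := by
        simp only [F, sum_diag, hsq, QuadraticMap.weightedSumSquares_apply, smul_eq_mul, map_sum]
        refine sum_congr rfl fun i _ => ?_
        rw [Algebra.smul_def, ← map_mul, mul_comm]

def liftOfAnticommute (w : ι → R) (γ : ι → A) (hsq : ∀ i, γ i * γ i = algebraMap R A (w i))
    (hanti : ∀ i j, i ≠ j → γ i * γ j + γ j * γ i = 0) :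
    CliffordAlgebra (QuadraticMap.weightedSumSquares R w) →ₐ[R] A :=
  lift _ ⟨Fintype.linearCombination R γ, sum_smul_mul_self_of_anticommute w γ hsq hanti⟩

theorem liftOfAnticommute_ι (w : ι → R) (γ : ι → A)
    (hsq : ∀ i, γ i * γ i = algebraMap R A (w i))
    (hanti : ∀ i j, i ≠ j → γ i * γ j + γ j * γ i = 0) (v : ι → R) :
    liftOfAnticommute w γ hsq hanti (CliffordAlgebra.ι _ v) = ∑ i, v i • γ i :=
  lift_ι_apply _ _ _

end CliffordAlgebra

namespace Matrix

theorem inner_toEuclideanLin_eq_neg {𝕜 n : Type*} [RCLike 𝕜] [Fintype n] [DecidableEq n]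
    {A : Matrix n n 𝕜} (hA : Aᴴ = -A) (x y : EuclideanSpace 𝕜 n) :
    inner 𝕜 (A.toEuclideanLin x) y = -inner 𝕜 x (A.toEuclideanLin y) := by
  rw [← LinearMap.adjoint_inner_right, ← toEuclideanLin_conjTranspose_eq_adjoint, hA, map_neg,
    LinearMap.neg_apply, inner_neg_right]

theorem finrank_eigenspace_toLin_diagonal {K V n : Type*} [Field K] [AddCommGroup V] [Module K V]
    [Fintype n] [DecidableEq n] [DecidableEq K] (b : Basis n K V) (d : n → K) (μ : K) :
    finrank K (End.eigenspace (toLin b b (diagonal d)) μ) = #{i | d i = μ} := by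
  have : FiniteDimensional K V := b.finiteDimensional_of_finite
  have hshift : toLin b b (diagonal d) - μ • 1 = toLin b b (diagonal fun i => d i - μ) := by
    rw [show (1 : End K V) = toLin b b 1 from (toLin_one b).symm, ← map_smul, ← map_sub,
      smul_one_eq_diagonal, diagonal_sub]
  have hrank := LinearMap.finrank_range_add_finrank_ker (toLin b b (diagonal fun i => d i - μ))
  rw [← rank_eq_finrank_range_toLin, rank_diagonal, finrank_eq_card_basis b] at hrank
  rw [End.eigenspace_def, hshift]
  have hcard := card_filter_add_card_filter_not (s := univ) (fun i => d i = μ)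
  simp only [sub_ne_zero, ne_eq, Fintype.card_subtype] at hrank
  simp only [card_univ] at hcard
  omega

end Matrix

def spinSign : Fin 7 → Fin 8 → ℤ :=
  ![![-1, 1, -1, 1, -1, 1, -1, 1], ![-1, 1, 1, -1, -1, 1, 1, -1],
    ![-1, -1, 1, 1, 1, 1, -1, -1], ![-1, 1, 1, -1, 1, -1, -1, 1],
    ![-1, -1, -1, -1, 1, 1, 1, 1], ![-1, 1, -1, 1, 1, -1, 1, -1],
    ![-1, -1, 1, 1, -1, -1, 1, 1]]

def spinGenerator (i : Fin 7) : Matrix (Fin 8) (Fin 8) ℤ :=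
  Matrix.of fun k l => if l = k ^^^ i.succ then spinSign i k else 0

theorem spinGenerator_mul_self (i : Fin 7) : spinGenerator i * spinGenerator i = -1 := by
  revert i; decide +kernel

theorem spinGenerator_anticommute (i j : Fin 7) (hij : i ≠ j) :
    spinGenerator i * spinGenerator j + spinGenerator j * spinGenerator i = 0 := by
  revert i j; decide +kernel

theorem spinGenerator_transpose (i : Fin 7) : (spinGenerator i).transpose = -spinGenerator i := by
  revert i; decide +kernel

def omegaOf {R : Type*} [Ring R] (g : Fin 7 → R) : R :=
  g 0 * g 1 * g 2 - g 0 * g 3 * g 4 - g 0 * g 5 * g 6 - g 1 * g 3 * g 5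
    + g 1 * g 4 * g 6 - g 2 * g 3 * g 6 - g 2 * g 4 * g 5

theorem map_omegaOf {R S F : Type*} [Ring R] [Ring S] [FunLike F R S] [RingHomClass F R S] (φ : F)
    (g : Fin 7 → R) : φ (omegaOf g) = omegaOf (φ ∘ g) := by
  simp only [omegaOf, map_sub, map_add, map_mul, Function.comp_apply]

def omegaDiagonal : Fin 8 → ℤ := ![1, 1, 1, -7, 1, 1, 1, 1]

theorem omegaOf_spinGenerator : omegaOf spinGenerator = Matrix.diagonal omegaDiagonal := by
  decide +kernel

noncomputable def realSpinGenerator (i : Fin 7) : Matrix (Fin 8) (Fin 8) ℝ :=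
  (Int.castRingHom ℝ).mapMatrix (spinGenerator i)

theorem realSpinGenerator_mul_self (i : Fin 7) :
    realSpinGenerator i * realSpinGenerator i = algebraMap ℝ _ (-1) := by
  rw [realSpinGenerator, ← map_mul, spinGenerator_mul_self, map_neg, map_one, map_neg, map_one]

theorem realSpinGenerator_anticommute (i j : Fin 7) (hij : i ≠ j) :
    realSpinGenerator i * realSpinGenerator j + realSpinGenerator j * realSpinGenerator i = 0 := by
  rw [realSpinGenerator, realSpinGenerator, ← map_mul, ← map_mul, ← map_add,
    spinGenerator_anticommute i j hij, map_zero]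

theorem realSpinGenerator_conjTranspose (i : Fin 7) :
    (realSpinGenerator i).conjTranspose = -realSpinGenerator i := by
  rw [Matrix.conjTranspose_eq_transpose_of_trivial, realSpinGenerator, RingHom.mapMatrix_apply,
    ← Matrix.transpose_map, spinGenerator_transpose, ← RingHom.mapMatrix_apply, map_neg]
  rfl

noncomputable def spinMatrixRep : CliffordAlgebra Q →ₐ[ℝ] Matrix (Fin 8) (Fin 8) ℝ :=
  CliffordAlgebra.liftOfAnticommute _ realSpinGenerator realSpinGenerator_mul_self
    realSpinGenerator_anticommute

theorem spinMatrixRep_ι (v : Fin 7 → ℝ) :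
    spinMatrixRep (CliffordAlgebra.ι Q v) = ∑ i, v i • realSpinGenerator i :=
  CliffordAlgebra.liftOfAnticommute_ι _ _ _ _ v

theorem spinMatrixRep_e (i : Fin 7) : spinMatrixRep (e i) = realSpinGenerator i :=
  (spinMatrixRep_ι _).trans <| by
    simp [Pi.single_apply]

theorem spinMatrixRep_omega :
    spinMatrixRep ω = Matrix.diagonal fun k => (omegaDiagonal k : ℝ) := by
  have hω : ω = omegaOf e := rfl
  have hgen : spinMatrixRep ∘ e = (Int.castRingHom ℝ).mapMatrix ∘ spinGenerator :=
    funext spinMatrixRep_e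
  rw [hω, map_omegaOf, hgen, ← map_omegaOf, omegaOf_spinGenerator, RingHom.mapMatrix_apply,
    Matrix.diagonal_map (map_zero _)]
  rfl

noncomputable def spinRep : CliffordAlgebra Q →ₐ[ℝ] Module.End ℝ (EuclideanSpace ℝ (Fin 8)) :=
  (Matrix.toLinAlgEquiv (EuclideanSpace.basisFun (Fin 8) ℝ).toBasis).toAlgHom.comp spinMatrixRep

theorem spinRep_apply (x : CliffordAlgebra Q) :
    spinRep x = (spinMatrixRep x).toEuclideanLin :=
  rfl

theorem spinMatrixRep_ι_conjTranspose (v : Fin 7 → ℝ) :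
    (spinMatrixRep (CliffordAlgebra.ι Q v)).conjTranspose =
      -spinMatrixRep (CliffordAlgebra.ι Q v) := by
  rw [spinMatrixRep_ι]
  simp only [Matrix.conjTranspose_sum, Matrix.conjTranspose_smul, star_trivial,
    realSpinGenerator_conjTranspose, smul_neg, sum_neg_distrib]

theorem finrank_eigenspace_spinRep_omega (μ : ℝ) :
    finrank ℝ (End.eigenspace (spinRep ω) μ) = #{k | (omegaDiagonal k : ℝ) = μ} := by
  rw [spinRep_apply, spinMatrixRep_omega, Matrix.toEuclideanLin_eq_toLin_orthonormal,
    Matrix.finrank_eigenspace_toLin_diagonal]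

/-- on the real 8-dimensional spin representation of Cl(ℝ⁷)
(an orthogonal representation, i.e. the generators eᵢ act skew-symmetrically),
ω acts as a symmetric endomorphism with eigenvalue −7 of multiplicity one and
eigenvalue +1 of multiplicity seven. -/
theorem stmt7 :
    ∃ ρ : CliffordAlgebra Q →ₐ[ℝ] Module.End ℝ (EuclideanSpace ℝ (Fin 8)),
      (∀ v : Fin 7 → ℝ, ∀ x y : EuclideanSpace ℝ (Fin 8),
        inner ℝ (ρ (CliffordAlgebra.ι Q v) x) y
          = -(inner ℝ x (ρ (CliffordAlgebra.ι Q v) y) : ℝ))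
      ∧ (ρ ω).IsSymmetric
      ∧ Module.finrank ℝ (Module.End.eigenspace (ρ ω) (-7)) = 1
      ∧ Module.finrank ℝ (Module.End.eigenspace (ρ ω) 1) = 7 := by
  refine ⟨spinRep, fun v x y => ?_, ?_, ?_, ?_⟩
  · exact Matrix.inner_toEuclideanLin_eq_neg (spinMatrixRep_ι_conjTranspose v) x y
  · rw [spinRep_apply, spinMatrixRep_omega, Matrix.isSymmetric_toEuclideanLin_iff]
    exact Matrix.isHermitian_diagonal _
  · rw [finrank_eigenspace_spinRep_omega]
    norm_cast
  · rw [finrank_eigenspace_spinRep_omega]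
    norm_cast
end

section
/- Let Ψ₀ be a unit spinor in the real 8-dimensional spin representation of Cl(R^7) satisfying ω·Ψ₀ = −7Ψ₀, where ω = e₁₂₃ − e₁₄₅ − e₁₆₇ − e₂₄₆ + e₂₅₇ − e₃₄₇ − e₃₅₆. Then the torsion element T = 2ω − 8e₁₂₃ satisfies T·Ψ₀ = −6Ψ₀. -/
/-! ### Auxiliary lemmas -/

lemma Q_single (i : Fin 7) : Q (Pi.single i 1) = -1 := by
  simp [Q, QuadraticMap.weightedSumSquares_apply, Pi.single_apply]

lemma polar_single {i j : Fin 7} (h : i ≠ j) :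
    QuadraticMap.polar Q (Pi.single i 1) (Pi.single j 1) = 0 := by
  simp only [QuadraticMap.polar, Q, QuadraticMap.weightedSumSquares_apply, Pi.add_apply,
    Pi.single_apply, smul_eq_mul, neg_one_mul, Finset.sum_neg_distrib]
  have key : ∀ x : Fin 7, ((if x = i then (1:ℝ) else 0) + if x = j then 1 else 0) *
      ((if x = i then (1:ℝ) else 0) + if x = j then 1 else 0)
      = (if x = i then (1:ℝ) else 0) + (if x = j then 1 else 0) := by
    intro x
    by_cases hi : x = i <;> by_cases hj : x = j <;> simp_all
  simp [key, Finset.sum_add_distrib]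

lemma e_sq (i : Fin 7) : e i * e i = -1 := by
  rw [e, CliffordAlgebra.ι_sq_scalar, Q_single]; simp

lemma e_sq' (i : Fin 7) (x : CliffordAlgebra Q) : e i * (e i * x) = -x := by
  rw [← mul_assoc, e_sq, neg_one_mul]

lemma e_swap {i j : Fin 7} (h : j < i) : e i * e j = -(e j * e i) := by
  have := CliffordAlgebra.ι_mul_ι_add_swap (Q := Q) (Pi.single i 1) (Pi.single j 1)
  rw [polar_single h.ne'] at this
  rw [e, e]
  simp only [map_zero] at this
  linear_combination (norm := noncomm_ring) this

lemma e_swap' {i j : Fin 7} (h : j < i) (x : CliffordAlgebra Q) :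
    e i * (e j * x) = -(e j * (e i * x)) := by
  rw [← mul_assoc, e_swap h, neg_mul, mul_assoc]

/-- The volume element ν = e₁e₂e₃e₄e₅e₆e₇. -/
noncomputable def ν : CliffordAlgebra Q := e 0 * e 1 * e 2 * e 3 * e 4 * e 5 * e 6

lemma nu_sq : ν * ν = 1 := by
  simp (disch := decide) only [ν, mul_assoc, e_swap', e_sq', e_swap, e_sq,
    neg_neg, mul_neg, neg_mul, mul_one]

lemma omega_sq : ω * ω = (7:ℝ) • 1 - (6:ℝ) • (ν * ω) := by
  simp (disch := decide) only [ω, ν, mul_add, add_mul, mul_sub, sub_mul, mul_assoc,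
    e_swap', e_sq', e_swap, e_sq, neg_neg, mul_neg, neg_mul, mul_one, smul_sub, smul_add,
    smul_neg, neg_sub, sub_neg_eq_add]
  module

lemma sigma_omega : (e 0 * e 1 * e 2) * ω = 1 - ν * ω + (e 0 * e 1 * e 2) * ν := by
  simp (disch := decide) only [ω, ν, mul_add, add_mul, mul_sub, sub_mul, mul_assoc,
    e_swap', e_sq', e_swap, e_sq, neg_neg, mul_neg, neg_mul, mul_one, neg_sub, sub_neg_eq_add]
  abel

/-- if Ψ₀ is a unit spinor of the real 8-dimensional spin representation
with ω·Ψ₀ = −7Ψ₀, then T·Ψ₀ = −6Ψ₀. -/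
theorem stmt8 (S : Type) [NormedAddCommGroup S] [InnerProductSpace ℝ S]
    [Module (CliffordAlgebra Q) S] [IsScalarTower ℝ (CliffordAlgebra Q) S]
    (hdim : Module.finrank ℝ S = 8)
    (Ψ₀ : S) (hunit : ‖Ψ₀‖ = 1) (hΨ : ω • Ψ₀ = (-7 : ℝ) • Ψ₀) :
    T • Ψ₀ = (-6 : ℝ) • Ψ₀ := by
  have helper : ∀ (a : CliffordAlgebra Q) (r : ℝ) (s : S), a • (r • s) = r • (a • s) := by
    intro a r s
    rw [← algebraMap_smul (CliffordAlgebra Q) r s, ← mul_smul, ← Algebra.commutes r a,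
      mul_smul, algebraMap_smul]
  have hνω : (ν * ω) • Ψ₀ = (-7:ℝ) • (ν • Ψ₀) := by
    rw [mul_smul, hΨ, helper]
  have hω2 : (ω * ω) • Ψ₀ = (49:ℝ) • Ψ₀ := by
    rw [mul_smul, hΨ, helper, hΨ, smul_smul]; norm_num
  rw [omega_sq, sub_smul, smul_assoc, smul_assoc, one_smul, hνω] at hω2
  -- hω2 : (7:ℝ) • Ψ₀ - (6:ℝ) • ((-7:ℝ) • (ν • Ψ₀)) = (49:ℝ) • Ψ₀
  have hν : ν • Ψ₀ = Ψ₀ := by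
    generalize hgen : ν • Ψ₀ = x at hω2 ⊢
    refine smul_right_injective S (by norm_num : (42:ℝ) ≠ 0) ?_
    linear_combination (norm := module) hω2
  have hσ : (e 0 * e 1 * e 2) • Ψ₀ = -Ψ₀ := by
    have h1 : ((e 0 * e 1 * e 2) * ω) • Ψ₀ = (-7:ℝ) • ((e 0 * e 1 * e 2) • Ψ₀) := by
      rw [mul_smul, hΨ, helper]
    rw [sigma_omega, add_smul, sub_smul, one_smul, hνω, hν, mul_smul, hν] at h1
    -- h1 : Ψ₀ - (-7:ℝ) • Ψ₀ + (e 0 * e 1 * e 2) • Ψ₀ = (-7:ℝ) • ((e 0 * e 1 * e 2) • Ψ₀)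
    generalize hgen : (e 0 * e 1 * e 2) • Ψ₀ = y at h1 ⊢
    refine smul_right_injective S (by norm_num : (-8:ℝ) ≠ 0) ?_
    linear_combination (norm := module) -h1
  rw [T, sub_smul, smul_assoc, smul_assoc, hΨ, hσ]
  module
end
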